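/- For every $v, f \in [0,1]$ there exist density operators $\sigma_0, \sigma_1$ and orthogonal projections $P_0, P_1$ on a finite-dimensional Hilbert space such that $\|\sqrt{\sigma_0}\sqrt{\sigma_1}\|_1 = f$, $\frac{1}{2}(\mathrm{Tr}(P_0\sigma_0)+\mathrm{Tr}(P_1\sigma_1)) = v$, and $\frac{1}{2}(\mathrm{Tr}(P_1P_0\sigma_0 P_0 P_1) + \mathrm{Tr}(P_0P_1\sigma_1 P_1 P_0)) = v\left(\max\{0,(2v-1)f - 2\sqrt{v(1-v)}\sqrt{1-f^2}\}\right)^2$. -/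

import Mathlib

open Matrix BigOperators ComplexOrder

/-- The positive semidefinite square root (as defined in Mathlib of December 2024). -/
noncomputable def Matrix.PosSemidef.sqrt {n 𝕜 : Type*} [Fintype n] [RCLike 𝕜] [DecidableEq n]
    {A : Matrix n n 𝕜} (hA : A.PosSemidef) : Matrix n n 𝕜 :=
  hA.1.eigenvectorUnitary.1 * diagonal ((↑) ∘ Real.sqrt ∘ hA.1.eigenvalues) *
  (star hA.1.eigenvectorUnitary : Matrix n n 𝕜)

/-- The trace norm of a complex matrix: `‖A‖₁ = Tr √(Aᴴ A)`. -/
noncomputable def traceNorm {d : ℕ} (A : Matrix (Fin d) (Fin d) ℂ) : ℝ :=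
  ((Matrix.posSemidef_conjTranspose_mul_self A).sqrt).trace.re

/-!
All four operators are taken rank-one, `σᵢ = |sᵢ⟩⟨sᵢ|` and `Pᵢ = |pᵢ⟩⟨pᵢ|` with real unit vectors,
so that the fidelity is `|⟨s₀, s₁⟩|`, the value is `(⟨p₀, s₀⟩² + ⟨p₁, s₁⟩²) / 2`, and the
error is `v ⟨p₀, p₁⟩²` once `⟨p₀, s₀⟩ = ⟨p₁, s₁⟩ = √v`.

Writing `v = cos² α` and `f = cos 2β`, the planar vectors at angles `∓β` and `∓(α + β)` give
`⟨p₀, p₁⟩ = cos (2α + 2β) = (2v - 1) f - 2 √(v (1 - v)) √(1 - f²)`, which settles the case where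
this is nonnegative. Otherwise `(√v - √(1 - f))² ≤ 1 - v`, and this is exactly what is needed to
fit `s₀ = (√v, c, z)`, `s₁ = (c, √v, z)` with `⟨s₀, s₁⟩ = f` against the orthogonal
`p₀ = e₀`, `p₁ = e₁`, making the error vanish.
-/

namespace Matrix.PosSemidef

variable {n 𝕜 : Type*} [Fintype n] [RCLike 𝕜] [DecidableEq n] {A B : Matrix n n 𝕜}

open scoped MatrixOrder

lemma sqrt_eq_cfcSqrt (hA : A.PosSemidef) : hA.sqrt = CFC.sqrt A := by
  rw [CFC.sqrt_eq_cfc, cfc_nnreal_eq_real _ A hA.nonneg, hA.1.cfc_eq]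
  simp only [IsHermitian.cfc, Matrix.PosSemidef.sqrt, Unitary.conjStarAlgAut_apply]
  congr 3
  funext x
  simp only [Function.comp_apply, Real.sqrt]

lemma sqrt_eq_of_sq_eq (hB : B.PosSemidef) (hA : A.PosSemidef) (h : A ^ 2 = B) :
    hB.sqrt = A := by
  rw [sqrt_eq_cfcSqrt]
  exact CFC.sqrt_unique (by rw [← sq, h]) hA.nonneg

end Matrix.PosSemidef

section SelfOuter

variable {n : Type*} [Fintype n]

noncomputable def selfOuter (u : n → ℝ) : Matrix n n ℂ :=
  vecMulVec (Complex.ofReal ∘ u) (Complex.ofReal ∘ u)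

omit [Fintype n] in
lemma star_ofReal_comp (u : n → ℝ) : star (Complex.ofReal ∘ u) = Complex.ofReal ∘ u := by
  ext i
  simp

lemma ofReal_comp_dotProduct (u w : n → ℝ) :
    (Complex.ofReal ∘ u) ⬝ᵥ (Complex.ofReal ∘ w) = ((u ⬝ᵥ w : ℝ) : ℂ) :=
  (RingHom.map_dotProduct Complex.ofRealHom u w).symm

lemma selfOuter_posSemidef (u : n → ℝ) : (selfOuter u).PosSemidef := by
  simpa only [selfOuter, star_ofReal_comp] using posSemidef_vecMulVec_self_star (Complex.ofReal ∘ u)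

lemma selfOuter_isHermitian (u : n → ℝ) : (selfOuter u).IsHermitian :=
  (selfOuter_posSemidef u).isHermitian

lemma trace_selfOuter (u : n → ℝ) : (selfOuter u).trace = ((u ⬝ᵥ u : ℝ) : ℂ) := by
  rw [selfOuter, trace_vecMulVec, ofReal_comp_dotProduct]

lemma selfOuter_mul_selfOuter_mul_selfOuter (u w : n → ℝ) :
    selfOuter w * selfOuter u * selfOuter w = (((w ⬝ᵥ u) ^ 2 : ℝ) : ℂ) • selfOuter w := by
  simp only [selfOuter, vecMulVec_mul_vecMulVec, ofReal_comp_dotProduct, vecMulVec_smul,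
    smul_mul_assoc, smul_smul, dotProduct_comm u w]
  push_cast
  ring_nf

lemma isIdempotentElem_selfOuter {u : n → ℝ} (hu : u ⬝ᵥ u = 1) :
    IsIdempotentElem (selfOuter u) := by
  rw [IsIdempotentElem, selfOuter, vecMulVec_mul_vecMulVec, ofReal_comp_dotProduct, hu,
    Complex.ofReal_one, one_smul]

lemma trace_selfOuter_mul_selfOuter_mul_selfOuter_mul_selfOuter_mul_selfOuter
    {q : n → ℝ} (hq : q ⬝ᵥ q = 1) (p s : n → ℝ) :
    (selfOuter q * selfOuter p * selfOuter s * selfOuter p * selfOuter q).trace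
      = (((q ⬝ᵥ p) ^ 2 * (p ⬝ᵥ s) ^ 2 : ℝ) : ℂ) := by
  rw [show selfOuter q * selfOuter p * selfOuter s * selfOuter p * selfOuter q
      = selfOuter q * (selfOuter p * selfOuter s * selfOuter p) * selfOuter q by
    simp only [Matrix.mul_assoc]]
  rw [selfOuter_mul_selfOuter_mul_selfOuter, Matrix.mul_smul, Matrix.smul_mul,
    selfOuter_mul_selfOuter_mul_selfOuter, smul_smul, trace_smul, trace_selfOuter, hq,
    smul_eq_mul]
  push_cast
  ring

lemma trace_selfOuter_mul_selfOuter (u w : n → ℝ) :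
    (selfOuter u * selfOuter w).trace = (((u ⬝ᵥ w) ^ 2 : ℝ) : ℂ) := by
  simp only [selfOuter]
  rw [vecMulVec_mul_vecMulVec, trace_vecMulVec, dotProduct_smul,
    ofReal_comp_dotProduct, smul_eq_mul]
  push_cast
  ring

variable [DecidableEq n]

lemma sq_smul_selfOuter {u : n → ℝ} (hu : u ⬝ᵥ u = 1) (c : ℝ) :
    ((c : ℂ) • selfOuter u) ^ 2 = ((c ^ 2 : ℝ) : ℂ) • selfOuter u := by
  rw [sq, smul_mul_smul_comm, (isIdempotentElem_selfOuter hu).eq, Complex.ofReal_pow, sq]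

lemma sqrt_selfOuter {u : n → ℝ} (hu : u ⬝ᵥ u = 1) :
    (selfOuter_posSemidef u).sqrt = selfOuter u :=
  (selfOuter_posSemidef u).sqrt_eq_of_sq_eq (selfOuter_posSemidef u)
    (by rw [sq, (isIdempotentElem_selfOuter hu).eq])

end SelfOuter

lemma traceNorm_selfOuter_mul_selfOuter {d : ℕ} {u w : Fin d → ℝ} (hu : u ⬝ᵥ u = 1)
    (hw : w ⬝ᵥ w = 1) : traceNorm (selfOuter u * selfOuter w) = |u ⬝ᵥ w| := by
  have hgram : (selfOuter u * selfOuter w)ᴴ * (selfOuter u * selfOuter w)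
      = (((|u ⬝ᵥ w| : ℝ) : ℂ) • selfOuter w) ^ 2 := by
    rw [sq_smul_selfOuter hw, sq_abs, dotProduct_comm, conjTranspose_mul,
      (selfOuter_isHermitian u).eq, (selfOuter_isHermitian w).eq, Matrix.mul_assoc,
      ← Matrix.mul_assoc (selfOuter u), (isIdempotentElem_selfOuter hu).eq, ← Matrix.mul_assoc,
      selfOuter_mul_selfOuter_mul_selfOuter]
  rw [traceNorm, (posSemidef_conjTranspose_mul_self _).sqrt_eq_of_sq_eq
    ((selfOuter_posSemidef w).smul (by exact_mod_cast abs_nonneg _)) hgram.symm,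
    trace_smul, trace_selfOuter, hw, smul_eq_mul, Complex.ofReal_one, mul_one, Complex.ofReal_re]

open Real

lemma cos_two_mul_arccos_sqrt_add_arccos {v f : ℝ} (hv : v ∈ Set.Icc (0 : ℝ) 1)
    (hf : f ∈ Set.Icc (-1 : ℝ) 1) :
    cos (2 * arccos √v + arccos f)
      = (2 * v - 1) * f - 2 * √(v * (1 - v)) * √(1 - f ^ 2) := by
  have hsqrt : √v ∈ Set.Icc (-1 : ℝ) 1 :=
    ⟨by linarith [sqrt_nonneg v], sqrt_le_one.mpr hv.2⟩
  rw [cos_add, cos_two_mul, sin_two_mul, cos_arccos hsqrt.1 hsqrt.2, cos_arccos hf.1 hf.2,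
    sin_arccos, sin_arccos, sq_sqrt hv.1, sqrt_mul hv.1]
  ring

lemma sub_sq_le_of_sq_le_sq {a b s t : ℝ} (ha : 0 ≤ a) (hb : 0 ≤ b) (hs : 0 ≤ s) (ht : 0 ≤ t)
    (hab : a ^ 2 + b ^ 2 = 1) (hst : s ^ 2 + t ^ 2 = 2) (hts : t ≤ s)
    (h : (a * s - b * t) ^ 2 ≤ (b * s + a * t) ^ 2) : (a - t) ^ 2 ≤ b ^ 2 := by
  have hlin : (a - b) * s ≤ (a + b) * t := by
    nlinarith [(abs_le_of_sq_le_sq' h (by positivity)).2]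
  have hupper : t ≤ a + b := by
    nlinarith [mul_nonneg ha hb]
  have hlower : a - b ≤ t := by
    rcases le_total a b with hle | hlt
    · linarith
    · have hsq : ((a - b) * s) ^ 2 ≤ ((a + b) * t) ^ 2 :=
        pow_le_pow_left₀ (mul_nonneg (sub_nonneg.2 hlt) hs) hlin 2
      have : (a - b) ^ 2 ≤ t ^ 2 := by nlinarith
      nlinarith
  nlinarith

lemma sqrt_sub_sqrt_one_sub_sq_le {v f : ℝ} (hv : v ∈ Set.Icc (0 : ℝ) 1)
    (hf : f ∈ Set.Icc (0 : ℝ) 1)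
    (hB : (2 * v - 1) * f - 2 * √(v * (1 - v)) * √(1 - f ^ 2) ≤ 0) :
    (√v - √(1 - f)) ^ 2 ≤ 1 - v := by
  have ha := sq_sqrt hv.1
  have hb := sq_sqrt (sub_nonneg.2 hv.2)
  have hs := sq_sqrt (by linarith [hf.1] : 0 ≤ 1 + f)
  have ht := sq_sqrt (sub_nonneg.2 hf.2)
  rw [sqrt_mul hv.1, show 1 - f ^ 2 = (1 + f) * (1 - f) by ring, sqrt_mul (by linarith [hf.1])]
    at hB
  rw [← hb]
  -- with `a = √v`, `b = √(1 - v)`, `s = √(1 + f)`, `t = √(1 - f)`, twice `hB` reads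
  -- `(a s - b t)² - (b s + a t)² ≤ 0`
  refine sub_sq_le_of_sq_le_sq (sqrt_nonneg _) (sqrt_nonneg _) (sqrt_nonneg (1 + f))
    (sqrt_nonneg _) (by linear_combination ha + hb) (by linear_combination hs + ht)
    (sqrt_le_sqrt (by linarith [hf.1])) ?_
  linear_combination
    2 * hB + (√(1 + f) ^ 2 - √(1 - f) ^ 2) * (ha - hb) + (2 * v - 1) * (hs - ht)

structure IsTightConfig {n : Type*} [Fintype n] (v f c : ℝ) (s₀ s₁ p₀ p₁ : n → ℝ) : Prop where
  s₀_unit : s₀ ⬝ᵥ s₀ = 1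
  s₁_unit : s₁ ⬝ᵥ s₁ = 1
  p₀_unit : p₀ ⬝ᵥ p₀ = 1
  p₁_unit : p₁ ⬝ᵥ p₁ = 1
  fidelity : s₀ ⬝ᵥ s₁ = f
  amplitude₀ : p₀ ⬝ᵥ s₀ = √v
  amplitude₁ : p₁ ⬝ᵥ s₁ = √v
  overlap : p₀ ⬝ᵥ p₁ = c

noncomputable def angleVec (θ : ℝ) : Fin 2 → ℝ := ![cos θ, sin θ]

lemma angleVec_dotProduct_angleVec (θ φ : ℝ) : angleVec θ ⬝ᵥ angleVec φ = cos (θ - φ) := by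
  simp [angleVec, dotProduct, Fin.sum_univ_two, cos_sub]

lemma isTightConfig_angleVec {α β : ℝ} (hα : 0 ≤ cos α) :
    IsTightConfig (cos α ^ 2) (cos (2 * β)) (cos (2 * α + 2 * β))
      (angleVec (-β)) (angleVec β) (angleVec (-(α + β))) (angleVec (α + β)) := by
  constructor <;> simp only [angleVec_dotProduct_angleVec, sqrt_sq hα, sub_self, cos_zero]
  case amplitude₁ => rw [add_sub_cancel_right]
  all_goals rw [← cos_neg]; ring_nf

lemma exists_isTightConfig_planar {v f : ℝ} (hv : v ∈ Set.Icc (0 : ℝ) 1)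
    (hf : f ∈ Set.Icc (-1 : ℝ) 1) :
    ∃ s₀ s₁ p₀ p₁ : Fin 2 → ℝ,
      IsTightConfig v f ((2 * v - 1) * f - 2 * √(v * (1 - v)) * √(1 - f ^ 2)) s₀ s₁ p₀ p₁ := by
  have hsqrt : √v ∈ Set.Icc (-1 : ℝ) 1 :=
    ⟨by linarith [sqrt_nonneg v], sqrt_le_one.mpr hv.2⟩
  have h := isTightConfig_angleVec (α := arccos √v) (β := arccos f / 2)
    (by rw [cos_arccos hsqrt.1 hsqrt.2]; exact sqrt_nonneg v)
  rw [mul_div_cancel₀ _ two_ne_zero, cos_two_mul_arccos_sqrt_add_arccos hv hf,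
    cos_arccos hsqrt.1 hsqrt.2, sq_sqrt hv.1, cos_arccos hf.1 hf.2] at h
  exact ⟨_, _, _, _, h⟩

lemma isTightConfig_fin3 {a c z : ℝ} (ha : 0 ≤ a) (hunit : a ^ 2 + c ^ 2 + z ^ 2 = 1) :
    IsTightConfig (a ^ 2) (2 * a * c + z ^ 2) 0 ![a, c, z] ![c, a, z] ![1, 0, 0] ![0, 1, 0] := by
  constructor <;> simp only [dotProduct, Fin.sum_univ_three, cons_val_zero, cons_val_one, cons_val,
    mul_one, mul_zero, one_mul, zero_mul, add_zero, zero_add, sqrt_sq ha]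
  case fidelity => ring
  all_goals linear_combination hunit

lemma exists_isTightConfig_spatial {v f : ℝ} (hv : 0 ≤ v) (hf : f ≤ 1)
    (hkey : (√v - √(1 - f)) ^ 2 ≤ 1 - v) :
    ∃ s₀ s₁ p₀ p₁ : Fin 3 → ℝ, IsTightConfig v f 0 s₀ s₁ p₀ p₁ := by
  set c := √v - √(1 - f)
  have ha := sq_sqrt hv
  have hz := sq_sqrt (by linarith : 0 ≤ 1 - v - c ^ 2)
  have h := isTightConfig_fin3 (a := √v) (c := c) (z := √(1 - v - c ^ 2)) (sqrt_nonneg v)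
    (by linear_combination ha + hz)
  rw [ha, show 2 * √v * c + √(1 - v - c ^ 2) ^ 2 = f by
    linear_combination hz + ha - sq_sqrt (sub_nonneg.2 hf)] at h
  exact ⟨_, _, _, _, h⟩

/-- Tightness of the fidelity-based robust consecutive measurement theorem. -/
theorem robust_CMT_fidelity_tightness (v f : ℝ)
    (hv : v ∈ Set.Icc (0 : ℝ) 1) (hf : f ∈ Set.Icc (0 : ℝ) 1) :
    ∃ (d : ℕ) (σ0 σ1 P0 P1 : Matrix (Fin d) (Fin d) ℂ)
      (h0 : σ0.PosSemidef) (h1 : σ1.PosSemidef),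
      σ0.trace = 1 ∧ σ1.trace = 1 ∧
      P0.IsHermitian ∧ P0 * P0 = P0 ∧ P1.IsHermitian ∧ P1 * P1 = P1 ∧
      traceNorm (h0.sqrt * h1.sqrt) = f ∧
      (1 / 2) * (((P0 * σ0).trace).re + ((P1 * σ1).trace).re) = v ∧
      (1 / 2) * (((P1 * P0 * σ0 * P0 * P1).trace).re + ((P0 * P1 * σ1 * P1 * P0).trace).re)
        = v * (max 0 ((2 * v - 1) * f
            - 2 * Real.sqrt (v * (1 - v)) * Real.sqrt (1 - f ^ 2))) ^ 2 := by
  set B := (2 * v - 1) * f - 2 * √(v * (1 - v)) * √(1 - f ^ 2)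
  obtain ⟨d, s₀, s₁, p₀, p₁, hc⟩ :
      ∃ (d : ℕ) (s₀ s₁ p₀ p₁ : Fin d → ℝ), IsTightConfig v f (max 0 B) s₀ s₁ p₀ p₁ := by
    rcases le_total 0 B with hB | hB
    · rw [max_eq_right hB]
      exact ⟨2, exists_isTightConfig_planar hv ⟨by linarith [hf.1], hf.2⟩⟩
    · rw [max_eq_left hB]
      exact ⟨3, exists_isTightConfig_spatial hv.1 hf.2 (sqrt_sub_sqrt_one_sub_sq_le hv hf hB)⟩
  refine ⟨d, selfOuter s₀, selfOuter s₁, selfOuter p₀, selfOuter p₁, selfOuter_posSemidef s₀,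
    selfOuter_posSemidef s₁, ?_, ?_, selfOuter_isHermitian p₀,
    (isIdempotentElem_selfOuter hc.p₀_unit).eq, selfOuter_isHermitian p₁,
    (isIdempotentElem_selfOuter hc.p₁_unit).eq, ?_, ?_, ?_⟩
  · rw [trace_selfOuter, hc.s₀_unit, Complex.ofReal_one]
  · rw [trace_selfOuter, hc.s₁_unit, Complex.ofReal_one]
  · rw [sqrt_selfOuter hc.s₀_unit, sqrt_selfOuter hc.s₁_unit,
      traceNorm_selfOuter_mul_selfOuter hc.s₀_unit hc.s₁_unit, hc.fidelity, abs_of_nonneg hf.1]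
  · rw [trace_selfOuter_mul_selfOuter, trace_selfOuter_mul_selfOuter, hc.amplitude₀,
      hc.amplitude₁, Complex.ofReal_re, sq_sqrt hv.1]
    ring
  · rw [trace_selfOuter_mul_selfOuter_mul_selfOuter_mul_selfOuter_mul_selfOuter hc.p₁_unit,
      trace_selfOuter_mul_selfOuter_mul_selfOuter_mul_selfOuter_mul_selfOuter hc.p₀_unit,
      Complex.ofReal_re, Complex.ofReal_re, dotProduct_comm p₁ p₀, hc.overlap, hc.amplitude₀,
      hc.amplitude₁, sq_sqrt hv.1]
    ring
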